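/- Given adjoint pairs d₀ : V₀ → V₁, d₁ : V₁ → V₂ with d₁ ∘ d₀ = 0, the space V₁ decomposes as the orthogonal direct sum of the image of d₀, the image of δ₂ (adjoint of d₁), and the harmonic space ker d₁ ∩ ker δ₁ (Hodge decomposition). -/

import Mathlib

open RealInnerProductSpace

/-! Adjointness identifies orthogonal complements of ranges with kernels:
`(range d₀)ᗮ = ker δ₁` and `(range δ₂)ᗮ = ker d₁`. Hence the harmonic space is the orthogonal
complement of `range d₀ ⊔ range δ₂`, a finite-dimensional and therefore complete subspace, which
together with its complement spans `V₁`. Orthogonality of `range d₀` and `range δ₂` is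
`range d₀ ≤ ker d₁`, i.e. `d₁ ∘ d₀ = 0`. -/

section Adjoint

variable {𝕜 E F : Type*} [RCLike 𝕜]
  [NormedAddCommGroup E] [InnerProductSpace 𝕜 E] [NormedAddCommGroup F] [InnerProductSpace 𝕜 F]
  {f : E →ₗ[𝕜] F} {g : F →ₗ[𝕜] E}

theorem inner_map_left_eq_of_adjoint (hfg : ∀ x y, inner 𝕜 (f x) y = inner 𝕜 x (g y))
    (y : F) (x : E) : inner 𝕜 (g y) x = inner 𝕜 y (f x) := by
  rw [← inner_conj_symm, ← hfg, inner_conj_symm]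

theorem orthogonal_range_eq_ker_of_adjoint (hfg : ∀ x y, inner 𝕜 (f x) y = inner 𝕜 x (g y)) :
    (LinearMap.range f)ᗮ = LinearMap.ker g := by
  ext y
  simp only [Submodule.mem_orthogonal, LinearMap.mem_range, forall_exists_index,
    forall_apply_eq_imp_iff, hfg, LinearMap.mem_ker]
  exact ⟨fun h => inner_self_eq_zero.mp (h _), fun h x => by rw [h, inner_zero_right]⟩

end Adjoint

theorem hodge_decomposition_general
    {V₀ V₁ V₂ : Type*}
    [NormedAddCommGroup V₀] [InnerProductSpace ℝ V₀] [FiniteDimensional ℝ V₀]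
    [NormedAddCommGroup V₁] [InnerProductSpace ℝ V₁]
    [NormedAddCommGroup V₂] [InnerProductSpace ℝ V₂] [FiniteDimensional ℝ V₂]
    (d₀ : V₀ →ₗ[ℝ] V₁) (d₁ : V₁ →ₗ[ℝ] V₂) (δ₁ : V₁ →ₗ[ℝ] V₀) (δ₂ : V₂ →ₗ[ℝ] V₁)
    (hadj₀ : ∀ (α : V₀) (β : V₁), ⟪d₀ α, β⟫ = ⟪α, δ₁ β⟫)
    (hadj₁ : ∀ (α : V₁) (β : V₂), ⟪d₁ α, β⟫ = ⟪α, δ₂ β⟫)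
    (hcomplex : d₁ ∘ₗ d₀ = 0) :
    (LinearMap.range d₀ ⊔ LinearMap.range δ₂ ⊔ (LinearMap.ker d₁ ⊓ LinearMap.ker δ₁) = ⊤) ∧
    (∀ x ∈ LinearMap.range d₀, ∀ y ∈ LinearMap.range δ₂, ⟪x, y⟫ = 0) ∧
    (∀ x ∈ LinearMap.range d₀, ∀ h ∈ LinearMap.ker d₁ ⊓ LinearMap.ker δ₁, ⟪x, h⟫ = 0) ∧
    (∀ y ∈ LinearMap.range δ₂, ∀ h ∈ LinearMap.ker d₁ ⊓ LinearMap.ker δ₁, ⟪y, h⟫ = 0) := by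
  have hker₀ := orthogonal_range_eq_ker_of_adjoint hadj₀
  have hker₁ := orthogonal_range_eq_ker_of_adjoint (inner_map_left_eq_of_adjoint hadj₁)
  have hexact : LinearMap.range d₀ ≤ LinearMap.ker d₁ := LinearMap.range_le_ker_iff.mpr hcomplex
  refine ⟨?_, ?_, ?_, ?_⟩
  · rw [inf_comm, ← hker₀, ← hker₁, Submodule.inf_orthogonal]
    exact Submodule.sup_orthogonal_of_hasOrthogonalProjection
  · exact fun x hx y hy => Submodule.inner_left_of_mem_orthogonal hy (hker₁ ▸ hexact hx)
  · exact fun x hx h hh => Submodule.inner_right_of_mem_orthogonal hx (hker₀ ▸ hh.2)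
  · exact fun y hy h hh => Submodule.inner_right_of_mem_orthogonal hy (hker₁ ▸ hh.1)

theorem hodge_decomposition
    {V₀ V₁ V₂ : Type*}
    [NormedAddCommGroup V₀] [InnerProductSpace ℝ V₀] [FiniteDimensional ℝ V₀]
    [NormedAddCommGroup V₁] [InnerProductSpace ℝ V₁] [FiniteDimensional ℝ V₁]
    [NormedAddCommGroup V₂] [InnerProductSpace ℝ V₂] [FiniteDimensional ℝ V₂]
    (d₀ : V₀ →ₗ[ℝ] V₁) (d₁ : V₁ →ₗ[ℝ] V₂) (δ₁ : V₁ →ₗ[ℝ] V₀) (δ₂ : V₂ →ₗ[ℝ] V₁)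
    (hadj₀ : ∀ (α : V₀) (β : V₁), ⟪d₀ α, β⟫ = ⟪α, δ₁ β⟫)
    (hadj₁ : ∀ (α : V₁) (β : V₂), ⟪d₁ α, β⟫ = ⟪α, δ₂ β⟫)
    (hcomplex : d₁ ∘ₗ d₀ = 0) :
    (LinearMap.range d₀ ⊔ LinearMap.range δ₂ ⊔ (LinearMap.ker d₁ ⊓ LinearMap.ker δ₁) = ⊤) ∧
    (∀ x ∈ LinearMap.range d₀, ∀ y ∈ LinearMap.range δ₂, ⟪x, y⟫ = 0) ∧
    (∀ x ∈ LinearMap.range d₀, ∀ h ∈ LinearMap.ker d₁ ⊓ LinearMap.ker δ₁, ⟪x, h⟫ = 0) ∧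
    (∀ y ∈ LinearMap.range δ₂, ∀ h ∈ LinearMap.ker d₁ ⊓ LinearMap.ker δ₁, ⟪y, h⟫ = 0) :=
  hodge_decomposition_general d₀ d₁ δ₁ δ₂ hadj₀ hadj₁ hcomplex
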